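/- Let A, Y be binary and U, W finite-valued random variables on a discrete probability space, all conditioning events having positive probability. Suppose the conditional odds ratio of Y on A given (U, W) equals exp(β) for all (u, w): [P(Y=1|A=1,U=u,W=w)·P(Y=0|A=0,U=u,W=w)] / [P(Y=1|A=0,U=u,W=w)·P(Y=0|A=1,U=u,W=w)] = exp(β). Then the joint conditional distribution factorizes as P(A=a, Y=y | U=u, W=w) = (1/ξ(u,w)) · P(A=a | Y=0, U=u, W=w) · P(Y=y | A=0, U=u, W=w) · exp(β·a·y), where ξ(u,w) = Σ_{a',y' ∈ {0,1}} P(A=a' | Y=0, U=u, W=w) · P(Y=y' | A=0, U=u, W=w) · exp(β·a'·y'). -/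
import Mathlib


open scoped BigOperators
open Real

attribute [local instance] Classical.propDecidable

set_option maxHeartbeats 2000000

noncomputable section

variable {Ω : Type*}

/-- Probability of an event under weight function `P` on a finite sample space. -/
def pr [Fintype Ω] (P : Ω → ℝ) (E : Ω → Prop) : ℝ :=
  ∑ ω, if E ω then P ω else 0

/-- Conditional probability `P(E | F)`. -/
def cpr [Fintype Ω] (P : Ω → ℝ) (E F : Ω → Prop) : ℝ :=
  pr P (fun ω => E ω ∧ F ω) / pr P F

/-- Conditional expectation `E[f | F]`. -/
def cexp [Fintype Ω] (P : Ω → ℝ) (f : Ω → ℝ) (F : Ω → Prop) : ℝ :=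
  (∑ ω, if F ω then f ω * P ω else 0) / pr P F

/-- Conditional independence `f ⊥ g | h` under `P`. -/
def CondIndep [Fintype Ω] (P : Ω → ℝ) {α β γ : Type*}
    (f : Ω → α) (g : Ω → β) (h : Ω → γ) : Prop :=
  ∀ a b c, pr P (fun ω => h ω = c) ≠ 0 →
    cpr P (fun ω => f ω = a ∧ g ω = b) (fun ω => h ω = c) =
      cpr P (fun ω => f ω = a) (fun ω => h ω = c) *
        cpr P (fun ω => g ω = b) (fun ω => h ω = c)


lemma pr_nonneg' [Fintype Ω] (P : Ω → ℝ) (hP : ∀ ω, 0 ≤ P ω) (E : Ω → Prop) :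
    0 ≤ pr P E := by
  apply Finset.sum_nonneg; intro ω _; split <;> simp [hP ω]

lemma pr_congr' [Fintype Ω] (P : Ω → ℝ) {E F : Ω → Prop} (h : ∀ ω, E ω ↔ F ω) :
    pr P E = pr P F := by
  unfold pr; apply Finset.sum_congr rfl; intro ω _; simp [h ω]

lemma pr_split' [Fintype Ω] (P : Ω → ℝ) (f : Ω → ℕ) (hf : ∀ ω, f ω = 0 ∨ f ω = 1)
    (E : Ω → Prop) :
    pr P E = pr P (fun ω => f ω = 0 ∧ E ω) + pr P (fun ω => f ω = 1 ∧ E ω) := by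
  unfold pr
  rw [← Finset.sum_add_distrib]
  apply Finset.sum_congr rfl
  intro ω _
  rcases hf ω with h | h <;> by_cases hE : E ω <;> simp [h, hE]

/-- Lemma S2, following Chen 2003: odds-ratio factorization of
a bivariate binary conditional distribution with constant conditional odds ratio. -/
theorem stmt12 [Fintype Ω] {𝒰 𝒲 : Type*} [Fintype 𝒰] [Fintype 𝒲]
    (P : Ω → ℝ) (hP : ∀ ω, 0 ≤ P ω) (hPsum : ∑ ω, P ω = 1)
    (A Y : Ω → ℕ) (U : Ω → 𝒰) (W : Ω → 𝒲)
    (hA : ∀ ω, A ω = 0 ∨ A ω = 1) (hY : ∀ ω, Y ω = 0 ∨ Y ω = 1)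
    (hposU : ∀ (a y : ℕ) (u : 𝒰) (w : 𝒲), (a = 0 ∨ a = 1) → (y = 0 ∨ y = 1) →
      pr P (fun ω => A ω = a ∧ Y ω = y ∧ U ω = u ∧ W ω = w) ≠ 0)
    (β : ℝ)
    (hOR : ∀ (u : 𝒰) (w : 𝒲),
      cpr P (fun ω => Y ω = 1) (fun ω => A ω = 1 ∧ U ω = u ∧ W ω = w) *
          cpr P (fun ω => Y ω = 0) (fun ω => A ω = 0 ∧ U ω = u ∧ W ω = w) /
        (cpr P (fun ω => Y ω = 1) (fun ω => A ω = 0 ∧ U ω = u ∧ W ω = w) *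
          cpr P (fun ω => Y ω = 0) (fun ω => A ω = 1 ∧ U ω = u ∧ W ω = w)) =
            Real.exp β)
    (ξ : 𝒰 → 𝒲 → ℝ)
    (hξ : ∀ (u : 𝒰) (w : 𝒲), ξ u w =
      cpr P (fun ω => A ω = 0) (fun ω => Y ω = 0 ∧ U ω = u ∧ W ω = w) *
        cpr P (fun ω => Y ω = 0) (fun ω => A ω = 0 ∧ U ω = u ∧ W ω = w) *
          Real.exp (β * (0 : ℝ) * (0 : ℝ)) +
      cpr P (fun ω => A ω = 0) (fun ω => Y ω = 0 ∧ U ω = u ∧ W ω = w) *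
        cpr P (fun ω => Y ω = 1) (fun ω => A ω = 0 ∧ U ω = u ∧ W ω = w) *
          Real.exp (β * (0 : ℝ) * (1 : ℝ)) +
      cpr P (fun ω => A ω = 1) (fun ω => Y ω = 0 ∧ U ω = u ∧ W ω = w) *
        cpr P (fun ω => Y ω = 0) (fun ω => A ω = 0 ∧ U ω = u ∧ W ω = w) *
          Real.exp (β * (1 : ℝ) * (0 : ℝ)) +
      cpr P (fun ω => A ω = 1) (fun ω => Y ω = 0 ∧ U ω = u ∧ W ω = w) *
        cpr P (fun ω => Y ω = 1) (fun ω => A ω = 0 ∧ U ω = u ∧ W ω = w) *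
          Real.exp (β * (1 : ℝ) * (1 : ℝ))) :
    ∀ (a y : ℕ) (u : 𝒰) (w : 𝒲), (a = 0 ∨ a = 1) → (y = 0 ∨ y = 1) →
      cpr P (fun ω => A ω = a ∧ Y ω = y) (fun ω => U ω = u ∧ W ω = w) =
        (ξ u w)⁻¹ *
          cpr P (fun ω => A ω = a) (fun ω => Y ω = 0 ∧ U ω = u ∧ W ω = w) *
          cpr P (fun ω => Y ω = y) (fun ω => A ω = 0 ∧ U ω = u ∧ W ω = w) *
          Real.exp (β * (a : ℝ) * (y : ℝ)) := by
  intro a y u w ha hy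
  set p00 := pr P (fun ω => A ω = 0 ∧ Y ω = 0 ∧ U ω = u ∧ W ω = w) with hp00
  set p01 := pr P (fun ω => A ω = 0 ∧ Y ω = 1 ∧ U ω = u ∧ W ω = w) with hp01
  set p10 := pr P (fun ω => A ω = 1 ∧ Y ω = 0 ∧ U ω = u ∧ W ω = w) with hp10
  set p11 := pr P (fun ω => A ω = 1 ∧ Y ω = 1 ∧ U ω = u ∧ W ω = w) with hp11
  have h00 : 0 < p00 := lt_of_le_of_ne (pr_nonneg' P hP _) (Ne.symm (hposU 0 0 u w (Or.inl rfl) (Or.inl rfl)))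
  have h01 : 0 < p01 := lt_of_le_of_ne (pr_nonneg' P hP _) (Ne.symm (hposU 0 1 u w (Or.inl rfl) (Or.inr rfl)))
  have h10 : 0 < p10 := lt_of_le_of_ne (pr_nonneg' P hP _) (Ne.symm (hposU 1 0 u w (Or.inr rfl) (Or.inl rfl)))
  have h11 : 0 < p11 := lt_of_le_of_ne (pr_nonneg' P hP _) (Ne.symm (hposU 1 1 u w (Or.inr rfl) (Or.inr rfl)))
  -- denominators
  have hY0 : pr P (fun ω => Y ω = 0 ∧ U ω = u ∧ W ω = w) = p00 + p10 :=
    pr_split' P A hA _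
  have e00 : pr P (fun ω => Y ω = 0 ∧ A ω = 0 ∧ U ω = u ∧ W ω = w) = p00 := pr_congr' P (by tauto)
  have e01 : pr P (fun ω => Y ω = 1 ∧ A ω = 0 ∧ U ω = u ∧ W ω = w) = p01 := pr_congr' P (by tauto)
  have e10 : pr P (fun ω => Y ω = 0 ∧ A ω = 1 ∧ U ω = u ∧ W ω = w) = p10 := pr_congr' P (by tauto)
  have e11 : pr P (fun ω => Y ω = 1 ∧ A ω = 1 ∧ U ω = u ∧ W ω = w) = p11 := pr_congr' P (by tauto)
  have f00 : pr P (fun ω => A ω = 0 ∧ Y ω = 0 ∧ U ω = u ∧ W ω = w) = p00 := rfl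
  have f01 : pr P (fun ω => A ω = 0 ∧ Y ω = 1 ∧ U ω = u ∧ W ω = w) = p01 := rfl
  have f10 : pr P (fun ω => A ω = 1 ∧ Y ω = 0 ∧ U ω = u ∧ W ω = w) = p10 := rfl
  have f11 : pr P (fun ω => A ω = 1 ∧ Y ω = 1 ∧ U ω = u ∧ W ω = w) = p11 := rfl
  have hA0 : pr P (fun ω => A ω = 0 ∧ U ω = u ∧ W ω = w) = p00 + p01 := by
    rw [pr_split' P Y hY (fun ω => A ω = 0 ∧ U ω = u ∧ W ω = w), e00, e01]
  have hA1 : pr P (fun ω => A ω = 1 ∧ U ω = u ∧ W ω = w) = p10 + p11 := by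
    rw [pr_split' P Y hY (fun ω => A ω = 1 ∧ U ω = u ∧ W ω = w), e10, e11]
  have hUW : pr P (fun ω => U ω = u ∧ W ω = w) = p00 + p01 + p10 + p11 := by
    rw [pr_split' P A hA (fun ω => U ω = u ∧ W ω = w), hA0, hA1]; ring
  -- odds ratio in p form
  have hOR' := hOR u w
  simp only [cpr, hA0, hA1, hY0, e00, e01, e10, e11] at hOR'
  have hE : Real.exp β = p00 * p11 / (p01 * p10) := by
    rw [← hOR']
    field_simp
  have hξ' := hξ u w
  simp only [cpr, hA0, hY0, e00, e01, f00, f01, f10, f11, mul_zero, zero_mul, mul_one,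
    one_mul, Real.exp_zero, hE] at hξ'
  have hξne : ξ u w = p00 * (p00 + p01 + p10 + p11) / ((p00 + p10) * (p00 + p01)) := by
    rw [hξ']
    field_simp
  have hsum : (0:ℝ) < p00 + p01 + p10 + p11 := by linarith
  have gnum : ∀ a' y' : ℕ, (a' = 0 ∨ a' = 1) → (y' = 0 ∨ y' = 1) →
      pr P (fun ω => (A ω = a' ∧ Y ω = y') ∧ U ω = u ∧ W ω = w) =
      pr P (fun ω => A ω = a' ∧ Y ω = y' ∧ U ω = u ∧ W ω = w) := by
    intro a' y' _ _; exact pr_congr' P (by tauto)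
  simp only [cpr, hUW, hA0, hY0, hξne, gnum a y ha hy]
  rcases ha with rfl | rfl <;> rcases hy with rfl | rfl <;>
    simp only [f00, f01, f10, f11, e00, e01, e10, e11, Nat.cast_zero, Nat.cast_one,
      mul_zero, zero_mul, mul_one, one_mul, Real.exp_zero, hE] <;>
    field_simp <;> ring
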